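/- arXiv:1506.01432 — 9 statements merged into one kernel-verified Lean document; each statement's English description precedes it below -/
import Mathlib

section
/- For a possibilistic logic theory Θ and a weighted formula (α, λ), Θ entails (α, λ) (every possibility distribution satisfying all formulas of Θ satisfies (α,λ)) if and only if the least specific model π* of Θ satisfies (α, λ). -/
/-- A possibilistic theory `Θ` entails `(α, λ)` (every possibility
distribution satisfying all formulas of `Θ` satisfies `(α,λ)`) iff the least
specific model `π*` of `Θ` satisfies `(α, λ)`. Here `π` satisfies `(α,λ)` iff
`N_π(α) = 1 - max_{ω ∉ α} π(ω) ≥ λ`, and `π*(ω) = 1 - max{λ : (β,λ) ∈ Θ, ω ∉ β}`. -/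
theorem stmt_1 {Ω : Type*} [Fintype Ω] (Θ : Finset (Set Ω × ℝ))
    (hw : ∀ p ∈ Θ, p.2 ∈ Set.Icc (0 : ℝ) 1)
    (α : Set Ω) (lam : ℝ) (hlam : lam ∈ Set.Icc (0 : ℝ) 1)
    (πstar : Ω → ℝ)
    (hπstar : ∀ ω, πstar ω = 1 - sSup {l : ℝ | ∃ β : Set Ω, (β, l) ∈ Θ ∧ ω ∉ β}) :
    ((∀ π : Ω → ℝ, (∀ ω, π ω ∈ Set.Icc (0 : ℝ) 1) →
        (∀ p ∈ Θ, p.2 ≤ 1 - sSup (π '' p.1ᶜ)) →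
        lam ≤ 1 - sSup (π '' αᶜ)) ↔
      lam ≤ 1 - sSup (πstar '' αᶜ)) := by
  have hbS : ∀ ω : Ω, BddAbove {l : ℝ | ∃ β : Set Ω, (β, l) ∈ Θ ∧ ω ∉ β} := by
    intro ω
    exact ⟨1, fun l hl => by obtain ⟨β, hβ, _⟩ := hl; exact (hw _ hβ).2⟩
  have hπs01 : ∀ ω, πstar ω ∈ Set.Icc (0 : ℝ) 1 := by
    intro ω
    rw [hπstar]
    have h1 : sSup {l : ℝ | ∃ β : Set Ω, (β, l) ∈ Θ ∧ ω ∉ β} ≤ 1 :=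
      Real.sSup_le (fun l hl => by obtain ⟨β, hβ, _⟩ := hl; exact (hw _ hβ).2) zero_le_one
    have h2 : 0 ≤ sSup {l : ℝ | ∃ β : Set Ω, (β, l) ∈ Θ ∧ ω ∉ β} :=
      Real.sSup_nonneg (fun l hl => by obtain ⟨β, hβ, _⟩ := hl; exact (hw _ hβ).1)
    constructor <;> linarith
  have hsat : ∀ p ∈ Θ, p.2 ≤ 1 - sSup (πstar '' p.1ᶜ) := by
    intro p hp
    have h1 : sSup (πstar '' p.1ᶜ) ≤ 1 - p.2 := by
      apply Real.sSup_le
      · rintro x ⟨ω, hω, rfl⟩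
        rw [hπstar]
        have : p.2 ≤ sSup {l : ℝ | ∃ β : Set Ω, (β, l) ∈ Θ ∧ ω ∉ β} :=
          le_csSup (hbS ω) ⟨p.1, by simpa using hp, hω⟩
        linarith
      · linarith [(hw p hp).2]
    linarith
  constructor
  · intro h
    exact h πstar hπs01 hsat
  · intro h π hπ01 hπsat
    have hle : ∀ ω, π ω ≤ πstar ω := by
      intro ω
      rw [hπstar]
      have hs : sSup {l : ℝ | ∃ β : Set Ω, (β, l) ∈ Θ ∧ ω ∉ β} ≤ 1 - π ω := by
        apply Real.sSup_le
        · rintro l ⟨β, hβ, hωβ⟩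
          have h1 : l ≤ 1 - sSup (π '' βᶜ) := hπsat (β, l) hβ
          have h2 : π ω ≤ sSup (π '' βᶜ) :=
            le_csSup ⟨1, fun x hx => by obtain ⟨ω', _, rfl⟩ := hx; exact (hπ01 ω').2⟩
              ⟨ω, hωβ, rfl⟩
          linarith
        · linarith [(hπ01 ω).2]
      linarith
    have hbπs : BddAbove (πstar '' αᶜ) :=
      ⟨1, fun x hx => by obtain ⟨ω', _, rfl⟩ := hx; exact (hπs01 ω').2⟩
    have hmain : sSup (π '' αᶜ) ≤ sSup (πstar '' αᶜ) := by
      rcases Set.eq_empty_or_nonempty αᶜ with he | hne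
      · simp [he]
      · apply Real.sSup_le
        · rintro x ⟨ω, hω, rfl⟩
          exact le_trans (hle ω) (le_csSup hbπs ⟨ω, hω, rfl⟩)
        · obtain ⟨ω, hω⟩ := hne
          exact le_trans (hπs01 ω).1 (le_csSup hbπs ⟨ω, hω, rfl⟩)
    linarith
end

section
/- Let M be a finite set of pairs (F, w) with F ⊆ Ω (models of a ground formula) and w > 0 a real weight, over a finite set of worlds Ω. Define sat(ω) = Σ{w : (F,w) ∈ M, ω ∈ F} and pen(ω) = maxsat - sat(ω), where maxsat = max_{ω' ∈ Ω} sat(ω'). Let Θ_M consist of, for each subset X ⊆ M, the pair (⋃X*, φ(Ω \ ⋃X*)), where X* = {F : (F,w) ∈ X}, φ(A) = (K + min_{ω ∈ A} pen(ω))/L for the penalty of the most probable world in A, and constants K, L chosen so that 0 = φ(Ω) and φ(A) < 1 for all nonempty A. Then the least specific model π of Θ_M satisfies π(ω) = 1 - (K + pen(ω))/L for every world ω. -/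
/-- Proposition 1: For a ground MLN `M` (finite set of weighted
subsets of `Ω` with positive weights), with `sat(ω)` the total weight of formulas
satisfied by `ω`, `pen(ω) = maxsat - sat(ω)`, and `φ(A) = (K + min_{ω∈A} pen(ω))/L`
with constants chosen so that `0 = φ(Ω)` and `0 ≤ φ(A) < 1` for nonempty `A`,
the least specific model `π` of the possibilistic theory
`Θ_M = {(⋃X*, φ((⋃X*)ᶜ)) : X ⊆ M}` satisfies `π(ω) = 1 - (K + pen(ω))/L`. -/
theorem stmt_3 {Ω : Type*} [Fintype Ω] [Nonempty Ω]
    (M : Finset (Set Ω × ℝ)) (hw : ∀ p ∈ M, 0 < p.2)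
    (sat pen : Ω → ℝ) (K L : ℝ) (φ : Set Ω → ℝ)
    (hsat : ∀ ω, sat ω = ∑ p ∈ M, p.1.indicator (fun _ => p.2) ω)
    (hpen : ∀ ω, pen ω = (⨆ ω', sat ω') - sat ω)
    (hφ : ∀ A : Set Ω, φ A = (K + sInf (pen '' A)) / L)
    (hφ0 : φ Set.univ = 0)
    (hφ1 : ∀ A : Set Ω, A.Nonempty → 0 ≤ φ A ∧ φ A < 1)
    (ΘM : Set (Set Ω × ℝ))
    (hΘM : ΘM = {q | ∃ X : Finset (Set Ω × ℝ), X ⊆ M ∧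
        q = (⋃ p ∈ X, p.1, φ ((⋃ p ∈ X, p.1)ᶜ))})
    (π : Ω → ℝ)
    (hπ : ∀ ω, π ω = 1 - sSup {l : ℝ | ∃ α : Set Ω, (α, l) ∈ ΘM ∧ ω ∉ α}) :
    ∀ ω, π ω = 1 - (K + pen ω) / L := by
  classical
  intro ω
  rw [hπ ω]
  congr 1
  -- basic facts about sat and pen
  obtain ⟨ω₀, hω₀⟩ := Finite.exists_max sat
  have hbdd : BddAbove (Set.range sat) := (Set.finite_range sat).bddAbove
  have hsup : (⨆ ω', sat ω') = sat ω₀ :=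
    le_antisymm (ciSup_le hω₀) (le_ciSup hbdd ω₀)
  have hpen0 : ∀ ω', 0 ≤ pen ω' := by
    intro ω'; rw [hpen, hsup]; linarith [hω₀ ω']
  have hpenω₀ : pen ω₀ = 0 := by rw [hpen, hsup]; ring
  have hmono : ∀ ω' : Ω, (∀ p ∈ M, ω ∉ p.1 → ω' ∉ p.1) → pen ω ≤ pen ω' := by
    intro ω' h
    rw [hpen ω, hpen ω']
    have hle : sat ω' ≤ sat ω := by
      rw [hsat, hsat]
      apply Finset.sum_le_sum
      intro p hp
      by_cases hmem : ω ∈ p.1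
      · by_cases hmem' : ω' ∈ p.1
        · simp [Set.indicator_of_mem, hmem, hmem']
        · rw [Set.indicator_of_mem hmem, Set.indicator_of_notMem hmem']
          exact (hw p hp).le
      · rw [Set.indicator_of_notMem hmem, Set.indicator_of_notMem (h p hp hmem)]
    linarith
  -- the witness formula built from the violated formulas
  set X₀ : Finset (Set Ω × ℝ) := M.filter (fun p => ω ∉ p.1) with hX₀
  set α₀ : Set Ω := ⋃ p ∈ X₀, p.1 with hα₀
  have hωα : ω ∉ α₀ := by
    intro h
    rcases Set.mem_iUnion₂.mp h with ⟨p, hp, hmem⟩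
    exact (Finset.mem_filter.mp hp).2 hmem
  have hωc : ω ∈ α₀ᶜ := hωα
  have hinf : sInf (pen '' α₀ᶜ) = pen ω := by
    refine le_antisymm (csInf_le (Set.toFinite _).bddBelow ⟨ω, hωc, rfl⟩) ?_
    refine le_csInf ⟨pen ω, ω, hωc, rfl⟩ ?_
    rintro b ⟨ω', hω', rfl⟩
    refine hmono ω' ?_
    intro p hp hmem hmem'
    exact hω' (Set.mem_iUnion₂.mpr ⟨p, Finset.mem_filter.mpr ⟨hp, hmem⟩, hmem'⟩)
  set S := {l : ℝ | ∃ α : Set Ω, (α, l) ∈ ΘM ∧ ω ∉ α} with hSdef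
  have hwit : (K + pen ω) / L ∈ S := by
    refine ⟨α₀, ?_, hωα⟩
    rw [hΘM]
    refine ⟨X₀, Finset.filter_subset _ _, ?_⟩
    rw [hφ, hinf]
  have hub : ∀ l ∈ S, l ≤ (K + pen ω) / L := by
    rintro l ⟨α, hαΘ, hωα'⟩
    rw [hΘM] at hαΘ
    obtain ⟨X, hXM, heq⟩ := hαΘ
    obtain ⟨hα, hl⟩ := Prod.mk.injEq .. ▸ heq
    subst hl
    have hωc' : ω ∈ αᶜ := hωα'
    rw [← hα] at *
    have hne : (pen '' αᶜ).Nonempty := ⟨pen ω, ω, hωc', rfl⟩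
    have hile : sInf (pen '' αᶜ) ≤ pen ω :=
      csInf_le (Set.toFinite _).bddBelow ⟨ω, hωc', rfl⟩
    have hinf0 : 0 ≤ sInf (pen '' αᶜ) := by
      refine le_csInf hne ?_
      rintro b ⟨ω', _, rfl⟩
      exact hpen0 ω'
    rcases lt_trichotomy L 0 with hL | hL | hL
    · -- degenerate case L < 0
      have hinfu : sInf (pen '' (Set.univ : Set Ω)) = 0 := by
        refine le_antisymm ?_ ?_
        · rw [← hpenω₀]
          exact csInf_le (Set.toFinite _).bddBelow ⟨ω₀, trivial, rfl⟩
        · refine le_csInf ⟨pen ω₀, ω₀, trivial, rfl⟩ ?_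
          rintro b ⟨ω', _, rfl⟩
          exact hpen0 ω'
      have hK : K = 0 := by
        have h0 := hφ0
        rw [hφ, hinfu, add_zero] at h0
        rcases div_eq_zero_iff.mp h0 with h | h
        · exact h
        · exact absurd h hL.ne
      have hge0 : 0 ≤ φ αᶜ := (hφ1 αᶜ ⟨ω, hωc'⟩).1
      rw [hφ, hK, zero_add] at hge0
      have hinfz : sInf (pen '' αᶜ) = 0 := by
        rcases div_nonneg_iff.mp hge0 with ⟨_, h⟩ | ⟨h, _⟩
        · exact absurd h (not_le.mpr hL)
        · exact le_antisymm h hinf0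
      have hrhs : 0 ≤ (K + pen ω) / L := by
        have h1 := (hφ1 {ω} ⟨ω, rfl⟩).1
        rw [hφ, Set.image_singleton, csInf_singleton] at h1
        exact h1
      rw [hφ, hK, zero_add, hinfz, zero_div]
      simpa [hK] using hrhs
    · simp [hφ, hL]
    · rw [hφ]
      gcongr
  refine le_antisymm (csSup_le ⟨_, hwit⟩ hub) (le_csSup ⟨(K + pen ω) / L, hub⟩ hwit)
end

section
/- Let p be a probability distribution on a finite set Ω induced by a ground MLN M (p(ω) proportional to exp(sat(ω))) and π the least specific model of the corresponding possibilistic theory Θ_M. Then for all worlds ω₁, ω₂: p(ω₁) > p(ω₂) if and only if π(ω₁) > π(ω₂). -/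
/-- Corollary 2, first part: Let `p` be the probability distribution
induced by a ground MLN `M` (`p(ω) = exp(sat(ω))/Z`) and `π` the least specific
model of the corresponding possibilistic theory, `π(ω) = 1 − (K + pen(ω))/L`, with
`pen(ω) = maxsat − sat(ω)`, `K ≥ 0` and `L > K + max pen`. Then for all worlds
`ω₁, ω₂`: `p(ω₁) > p(ω₂)` iff `π(ω₁) > π(ω₂)`. -/
theorem stmt_5 {Ω : Type*} [Fintype Ω] [Nonempty Ω]
    (M : Finset (Set Ω × ℝ)) (hw : ∀ q ∈ M, 0 < q.2)
    (sat pen : Ω → ℝ) (K L Z : ℝ) (p π : Ω → ℝ)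
    (hsat : ∀ ω, sat ω = ∑ q ∈ M, q.1.indicator (fun _ => q.2) ω)
    (hpen : ∀ ω, pen ω = (⨆ ω', sat ω') - sat ω)
    (hZ : Z = ∑ ω : Ω, Real.exp (sat ω))
    (hp : ∀ ω, p ω = Real.exp (sat ω) / Z)
    (hK : 0 ≤ K) (hL : K + (⨆ ω, pen ω) < L)
    (hπ : ∀ ω, π ω = 1 - (K + pen ω) / L) :
    ∀ ω₁ ω₂, p ω₁ > p ω₂ ↔ π ω₁ > π ω₂ := by
  have hZpos : 0 < Z := by
    rw [hZ]
    exact Finset.sum_pos (fun ω _ => Real.exp_pos _) Finset.univ_nonempty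
  have hbdd : BddAbove (Set.range sat) := (Set.finite_range sat).bddAbove
  have hpen_nonneg : ∀ ω, 0 ≤ pen ω := fun ω => by
    rw [hpen]; exact sub_nonneg.2 (le_ciSup hbdd ω)
  have hLpos : 0 < L := by
    obtain ⟨ω⟩ := ‹Nonempty Ω›
    have h1 : pen ω ≤ ⨆ ω, pen ω := le_ciSup (Set.finite_range pen).bddAbove ω
    linarith [hpen_nonneg ω]
  intro ω₁ ω₂
  rw [hp, hp, hπ, hπ, gt_iff_lt, gt_iff_lt, div_lt_div_iff_of_pos_right hZpos, Real.exp_lt_exp,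
    sub_lt_sub_iff_left, div_lt_div_iff_of_pos_right hLpos, add_lt_add_iff_left,
    hpen, hpen, sub_lt_sub_iff_left]
end

section
/- For a ground MLN M over finite Ω with penalty function pen, evidence E ⊆ Ω nonempty, and formulas F₁,…,F_l ⊆ Ω from M: pen(M, E ∩ ¬F₁ ∩ … ∩ ¬F_l) > pen(M, E) if and only if {F₁,…,F_l} intersects every maximal consistent set Y ∈ Cons_E(M), where Cons_E(M) is the collection of sets of formulas of M satisfied by some most-plausible (minimum-penalty) world of E. -/
/-- Lemma 1: For a ground MLN `M` over finite `Ω` with penalty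
function `pen`, nonempty evidence `E ⊆ Ω`, and formulas `F₁,…,F_l` from `M`:
`pen(M, E ∩ ¬F₁ ∩ … ∩ ¬F_l) > pen(M, E)` iff `{F₁,…,F_l}` intersects every
maximal consistent set `Y(ω)` for `ω` a minimum-penalty world of `E`
(equivalently, every such `ω` satisfies some `F ∈ {F₁,…,F_l}`).
Penalties of sets of worlds are `EReal`-valued infima (`+∞` on the empty set). -/
theorem stmt_7 {Ω : Type*} [Fintype Ω]
    (M : Finset (Set Ω × ℝ)) (hw : ∀ q ∈ M, 0 < q.2)
    (pen : Ω → ℝ)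
    (hpen : ∀ ω, pen ω = ∑ q ∈ M, (q.1ᶜ).indicator (fun _ => q.2) ω)
    (E : Set Ω) (hE : E.Nonempty)
    (Fs : Finset (Set Ω)) (hFs : ∀ F ∈ Fs, ∃ w : ℝ, (F, w) ∈ M) :
    ((⨅ ω ∈ E, (pen ω : EReal)) < ⨅ ω ∈ (E ∩ ⋂ F ∈ Fs, Fᶜ), (pen ω : EReal) ↔
      ∀ ω ∈ {ω ∈ E | ∀ ω' ∈ E, pen ω ≤ pen ω'}, ∃ F ∈ Fs, ω ∈ F) := by
  set A : Set Ω := E ∩ ⋂ F ∈ Fs, Fᶜ with hAdef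
  obtain ⟨ω₀, hω₀E, hmin⟩ := Set.exists_min_image E pen (Set.toFinite E) hE
  have hIE : (⨅ ω ∈ E, (pen ω : EReal)) = (pen ω₀ : EReal) := by
    refine le_antisymm (iInf₂_le ω₀ hω₀E) (le_iInf₂ fun ω hω => ?_)
    exact_mod_cast hmin ω hω
  constructor
  · intro h ω hω
    by_contra hc
    push_neg at hc
    have hωA : ω ∈ A := ⟨hω.1, Set.mem_iInter₂.2 fun F hF => hc F hF⟩
    have h1 : (⨅ ω' ∈ A, (pen ω' : EReal)) ≤ (pen ω : EReal) := iInf₂_le ω hωA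
    have h2 : (pen ω : EReal) ≤ (pen ω₀ : EReal) := by
      exact_mod_cast hω.2 ω₀ hω₀E
    rw [hIE] at h
    exact absurd (h1.trans h2) (not_le.2 h)
  · intro h
    rw [hIE]
    by_cases hA : A.Nonempty
    · obtain ⟨ω₁, hω₁A, hmin₁⟩ := Set.exists_min_image A pen (Set.toFinite A) hA
      have hIA : (⨅ ω ∈ A, (pen ω : EReal)) = (pen ω₁ : EReal) := by
        refine le_antisymm (iInf₂_le ω₁ hω₁A) (le_iInf₂ fun ω hω => ?_)
        exact_mod_cast hmin₁ ω hω
      rw [hIA]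
      have hω₁E : ω₁ ∈ E := hω₁A.1
      have : pen ω₀ < pen ω₁ := by
        by_contra hle
        push_neg at hle
        have hω₁min : ∀ ω' ∈ E, pen ω₁ ≤ pen ω' :=
          fun ω' hω' => hle.trans (hmin ω' hω')
        obtain ⟨F, hF, hωF⟩ := h ω₁ ⟨hω₁E, hω₁min⟩
        exact (Set.mem_iInter₂.1 hω₁A.2 F hF) hωF
      exact_mod_cast this
    · rw [Set.not_nonempty_iff_eq_empty] at hA
      simp [hA]
end

section
/- Moving a disjunct to the evidence (part i): Let pen : Ω → ℝ on finite Ω, E ⊆ Ω nonempty, and literals y₁,…,y_m (subsets of Ω) such that every minimum-penalty world of E satisfies y₁ ∨ … ∨ y_m. Then for each i, either every minimum-penalty world of E ∩ ¬y_i satisfies y₁ ∨ … ∨ y_{i−1} ∨ y_{i+1} ∨ … ∨ y_m (or E ∩ ¬y_i is empty), or every minimum-penalty world of E satisfies y_i. -/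
/-- The set of `pen`-minimal worlds of `A`. -/
def minset {Ω : Type*} (pen : Ω → ℝ) (A : Set Ω) : Set Ω :=
  {ω ∈ A | ∀ ω' ∈ A, pen ω ≤ pen ω'}

/-- Lemma `moving`, part i: If every minimum-penalty world of `E`
satisfies `y₁ ∨ … ∨ y_m`, then for each `i`, either every minimum-penalty world
of `E ∩ ¬y_i` satisfies the disjunction of the remaining literals (or `E ∩ ¬y_i`
is empty), or every minimum-penalty world of `E` satisfies `y_i`. -/
theorem stmt_8 {Ω : Type*} [Fintype Ω]
    (pen : Ω → ℝ) (E : Set Ω) (hE : E.Nonempty)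
    (m : ℕ) (y : Fin m → Set Ω)
    (h : minset pen E ⊆ ⋃ i, y i) :
    ∀ i : Fin m,
      (E ∩ (y i)ᶜ = ∅ ∨ minset pen (E ∩ (y i)ᶜ) ⊆ ⋃ j ∈ {j : Fin m | j ≠ i}, y j) ∨
        minset pen E ⊆ y i := by
  intro i
  by_cases hsub : minset pen E ⊆ y i
  · exact Or.inr hsub
  · left; right
    obtain ⟨ω₀, hω₀min, hω₀y⟩ := Set.not_subset.mp hsub
    obtain ⟨hω₀E, hω₀le⟩ := hω₀min
    intro ω hω
    obtain ⟨⟨hωE, hωy⟩, hωle⟩ := hω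
    -- ω is minimal in E
    have hmin : ω ∈ minset pen E := by
      refine ⟨hωE, fun ω' hω' => ?_⟩
      calc pen ω ≤ pen ω₀ := hωle ω₀ ⟨hω₀E, hω₀y⟩
        _ ≤ pen ω' := hω₀le ω' hω'
    obtain ⟨_, ⟨j, rfl⟩, hj⟩ := h hmin
    refine Set.mem_biUnion (show j ∈ {j : Fin m | j ≠ i} from ?_) hj
    rintro rfl
    exact hωy hj
end

section
/- Moving disjuncts to the evidence (part ii): Under the hypotheses of part (i), there exist an index j and a subset {y'₁,…,y'_{m'}} ⊆ {y₁,…,y_m} \ {y_j} such that E ∩ ¬y'₁ ∩ … ∩ ¬y'_{m'} is nonempty and every minimum-penalty world of E ∩ ¬y'₁ ∩ … ∩ ¬y'_{m'} satisfies y_j. -/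
/-- Lemma `moving`, part ii: If every minimum-penalty world of the
nonempty evidence `E` satisfies `y₁ ∨ … ∨ y_m`, then there exist an index `j`
and a subset `{y'₁,…,y'_{m'}} ⊆ {y₁,…,y_m} \ {y_j}` such that
`E ∩ ¬y'₁ ∩ … ∩ ¬y'_{m'}` is nonempty and every minimum-penalty world of it
satisfies `y_j`. -/
theorem stmt_9 {Ω : Type*} [Fintype Ω]
    (pen : Ω → ℝ) (E : Set Ω) (hE : E.Nonempty)
    (m : ℕ) (y : Fin m → Set Ω)
    (h : minset pen E ⊆ ⋃ i, y i) :
    ∃ j : Fin m, ∃ S : Finset (Fin m), j ∉ S ∧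
      (E ∩ ⋂ i ∈ S, (y i)ᶜ).Nonempty ∧
      minset pen (E ∩ ⋂ i ∈ S, (y i)ᶜ) ⊆ y j := by
  classical
  -- minset E is nonempty
  obtain ⟨ω₀, hω₀E, hω₀min⟩ := Set.exists_min_image E pen (Set.toFinite E) hE
  have hM : (minset pen E).Nonempty := ⟨ω₀, hω₀E, hω₀min⟩
  set M := minset pen E with hMdef
  -- choose S of maximal cardinality with M ∩ ⋂_{i∈S} (y i)ᶜ nonempty
  have hP : ∃ S : Finset (Fin m), (M ∩ ⋂ i ∈ S, (y i)ᶜ).Nonempty := by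
    refine ⟨∅, ?_⟩
    simpa using hM
  set P : Finset (Fin m) → Prop := fun S => (M ∩ ⋂ i ∈ S, (y i)ᶜ).Nonempty
  obtain ⟨S, hS, hSmax⟩ :=
    Finset.exists_max_image ((Finset.univ : Finset (Finset (Fin m))).filter P)
      Finset.card (by
        obtain ⟨S, hS⟩ := hP
        exact ⟨S, Finset.mem_filter.mpr ⟨Finset.mem_univ _, hS⟩⟩)
  have hSP : P S := (Finset.mem_filter.mp hS).2
  obtain ⟨ω, hωM, hωS⟩ := hSP
  obtain ⟨j, hj⟩ : ∃ j, ω ∈ y j := by simpa using h hωM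
  have hjS : j ∉ S := by
    intro hjS
    have := Set.mem_iInter₂.mp hωS j hjS
    exact this hj
  refine ⟨j, S, hjS, ⟨ω, hωM.1, hωS⟩, ?_⟩
  intro ω' hω'
  by_contra hω'j
  -- ω' is pen-minimal in E ∩ ⋂, and ω is in that set, so pen ω' ≤ pen ω, hence ω' ∈ M
  have hω'E : ω' ∈ E := hω'.1.1
  have hle : pen ω' ≤ pen ω := hω'.2 ω ⟨hωM.1, hωS⟩
  have hω'M : ω' ∈ M := by
    refine ⟨hω'E, fun z hz => le_trans hle (hωM.2 z hz)⟩
  -- then S ∪ {j} contradicts maximality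
  have hbig : P (insert j S) := by
    refine ⟨ω', hω'M, ?_⟩
    refine Set.mem_iInter₂.mpr fun i hi => ?_
    rcases Finset.mem_insert.mp hi with rfl | hi
    · exact hω'j
    · exact Set.mem_iInter₂.mp hω'.1.2 i hi
  have hmem : insert j S ∈ (Finset.univ : Finset (Finset (Fin m))).filter P := by
    exact Finset.mem_filter.mpr ⟨Finset.mem_univ _, hbig⟩
  have := hSmax _ hmem
  have : (insert j S).card = S.card + 1 := Finset.card_insert_of_notMem hjS
  omega
end

section
/- Rational monotonicity for MAP inference via penalty minimization: Let pen : Ω → ℝ on finite Ω, E ⊆ Ω nonempty, x, y ⊆ Ω with E ∩ y nonempty. If every pen-minimal world of E lies in x, and not every pen-minimal world of E lies in ¬y (i.e., some pen-minimal world of E lies in y), then every pen-minimal world of E ∩ y lies in x, and moreover min pen over E ∩ y equals min pen over E. -/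
/-- Rational monotonicity for MAP inference via penalty
minimization: if every pen-minimal world of `E` lies in `x`, and not every
pen-minimal world of `E` lies in `¬y`, then every pen-minimal world of `E ∩ y`
lies in `x`, and the minimum penalty over `E ∩ y` equals that over `E`. -/
theorem stmt_10 {Ω : Type*} [Fintype Ω]
    (pen : Ω → ℝ) (E x y : Set Ω)
    (hE : E.Nonempty) (hEy : (E ∩ y).Nonempty)
    (h1 : minset pen E ⊆ x) (h2 : ¬ minset pen E ⊆ yᶜ) :
    minset pen (E ∩ y) ⊆ x ∧ sInf (pen '' (E ∩ y)) = sInf (pen '' E) := by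
  obtain ⟨ω₀, hm, hy⟩ := Set.not_subset.mp h2
  simp only [Set.mem_compl_iff, not_not] at hy
  obtain ⟨hω₀E, hω₀min⟩ := hm
  have hω₀Ey : ω₀ ∈ E ∩ y := ⟨hω₀E, hy⟩
  have hfinE : (pen '' E).Finite := (Set.toFinite E).image pen
  have hfinEy : (pen '' (E ∩ y)).Finite := (Set.toFinite _).image pen
  have hE1 : sInf (pen '' E) = pen ω₀ := by
    apply le_antisymm
    · exact csInf_le hfinE.bddBelow ⟨ω₀, hω₀E, rfl⟩
    · exact le_csInf (hE.image pen) (by rintro r ⟨ω', hω', rfl⟩; exact hω₀min ω' hω')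
  have hE2 : sInf (pen '' (E ∩ y)) = pen ω₀ := by
    apply le_antisymm
    · exact csInf_le hfinEy.bddBelow ⟨ω₀, hω₀Ey, rfl⟩
    · exact le_csInf (hEy.image pen)
        (by rintro r ⟨ω', hω', rfl⟩; exact hω₀min ω' hω'.1)
  refine ⟨?_, by rw [hE1, hE2]⟩
  rintro ω ⟨⟨hωE, hωy⟩, hωmin⟩
  apply h1
  refine ⟨hωE, fun ω' hω' => ?_⟩
  calc pen ω ≤ pen ω₀ := hωmin ω₀ hω₀Ey
    _ ≤ pen ω' := hω₀min ω' hω'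
end

section
/- Cautious monotonicity for MAP inference: Let pen : Ω → ℝ on finite Ω and A, y ⊆ Ω with A nonempty. If every pen-minimal world of A lies in y, then A ∩ y is nonempty, the set of pen-minimal worlds of A ∩ y equals the set of pen-minimal worlds of A, and consequently for any x ⊆ Ω, every pen-minimal world of A lies in x iff every pen-minimal world of A ∩ y lies in x. -/
/-- Cautious monotonicity for MAP inference: if every pen-minimal
world of the nonempty set `A` lies in `y`, then `A ∩ y` is nonempty, the
pen-minimal worlds of `A ∩ y` are exactly those of `A`, and consequently for any
`x`, every pen-minimal world of `A` lies in `x` iff every pen-minimal world of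
`A ∩ y` lies in `x`. -/
theorem stmt_11 {Ω : Type*} [Fintype Ω]
    (pen : Ω → ℝ) (A y : Set Ω) (hA : A.Nonempty)
    (h : minset pen A ⊆ y) :
    (A ∩ y).Nonempty ∧ minset pen (A ∩ y) = minset pen A ∧
      ∀ x : Set Ω, (minset pen A ⊆ x ↔ minset pen (A ∩ y) ⊆ x) := by
  obtain ⟨m, hmA, hmin⟩ := Set.exists_min_image A pen A.toFinite hA
  have hmmin : m ∈ minset pen A := ⟨hmA, hmin⟩
  have hmy : m ∈ A ∩ y := ⟨hmA, h hmmin⟩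
  have heq : minset pen (A ∩ y) = minset pen A := by
    ext ω
    constructor
    · rintro ⟨⟨hωA, _⟩, hω⟩
      exact ⟨hωA, fun ω' hω' => le_trans (hω m hmy) (hmin ω' hω')⟩
    · rintro ⟨hωA, hω⟩
      exact ⟨⟨hωA, h ⟨hωA, hω⟩⟩, fun ω' hω' => hω ω' hω'.1⟩
  exact ⟨⟨m, hmy⟩, heq, fun x => by rw [heq]⟩
end

section
/- Constructing the default-based theory Θ^k is sound at the world level (Lemma: if φ(ω) ≤ λ then ω is a model of Θ^k_λ): Let pen : Ω → ℝ≥0 and define φ(A) = (K + min_{ω∈A} pen(ω))/L for nonempty A, with fixed K ≥ 0 and L > 0. Suppose Θ is a finite set of pairs of either the form (E → X, φ(E)) where E, X ⊆ Ω, E nonempty, and every pen-minimal world of E lies in X; or the form (¬(E ∩ X), λ') with λ' < φ(E ∩ X). Then for any world ω and any λ ≥ φ({ω}), ω satisfies every formula of Θ whose weight is ≥ λ. -/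
/-- Lemma 3: Let `pen : Ω → ℝ≥0` and `φ(A) = (K + min_{ω∈A} pen(ω))/L`
with `K ≥ 0`, `L > 0`. Suppose every formula of `Θ` is either of the form
`(E → X, φ(E))` with `E` nonempty and every pen-minimal world of `E` in `X`, or of
the form `(¬(E ∩ X), λ')` with `λ' < φ(E ∩ X)`. Then for any world `ω` and any
`λ ≥ φ({ω})`, `ω` satisfies every formula of `Θ` of weight `≥ λ`. -/
theorem stmt_12 {Ω : Type*} [Fintype Ω]
    (pen : Ω → ℝ) (hpen : ∀ ω, 0 ≤ pen ω)
    (K L : ℝ) (hK : 0 ≤ K) (hL : 0 < L)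
    (φ : Set Ω → ℝ) (hφ : ∀ A : Set Ω, φ A = (K + sInf (pen '' A)) / L)
    (Θ : Finset (Set Ω × ℝ))
    (hΘ : ∀ q ∈ Θ,
      (∃ E X : Set Ω, E.Nonempty ∧ minset pen E ⊆ X ∧ q = (Eᶜ ∪ X, φ E)) ∨
      (∃ E X : Set Ω, q.1 = (E ∩ X)ᶜ ∧ q.2 < φ (E ∩ X))) :
    ∀ (ω : Ω) (lam : ℝ), φ {ω} ≤ lam → ∀ q ∈ Θ, lam ≤ q.2 → ω ∈ q.1 := by
  intro ω lam hlam q hq hw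
  have hφω : φ {ω} = (K + pen ω) / L := by
    rw [hφ, Set.image_singleton, csInf_singleton]
  have hinf_le : ∀ (A : Set Ω) (x : Ω), x ∈ A → sInf (pen '' A) ≤ pen x := by
    intro A x hx
    exact csInf_le (Set.Finite.bddBelow (Set.toFinite _)) ⟨x, hx, rfl⟩
  rcases hΘ q hq with ⟨E, X, hEne, hmin, rfl⟩ | ⟨E, X, h1, h2⟩
  · -- case E → X
    by_cases hωE : ω ∈ E
    · right
      apply hmin
      refine ⟨hωE, fun ω' hω' => ?_⟩
      have h1 : (K + pen ω) / L ≤ (K + sInf (pen '' E)) / L := by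
        rw [← hφω, ← hφ]; exact le_trans hlam hw
      have h2 : pen ω ≤ sInf (pen '' E) := by
        have := (div_le_div_iff_of_pos_right hL).mp h1
        linarith
      exact le_trans h2 (hinf_le E ω' hω')
    · exact Or.inl hωE
  · -- case ¬(E ∩ X)
    rw [h1]
    intro hmem
    have hle : φ (E ∩ X) ≤ φ {ω} := by
      rw [hφ, hφω]
      have := hinf_le (E ∩ X) ω hmem
      exact (div_le_div_iff_of_pos_right hL).mpr (by linarith)
    linarith [le_trans hlam hw]
end
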